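/- arXiv:2106.08971 — 4 statements merged into one kernel-verified Lean document; each statement's English description precedes it below -/
import Mathlib

section
/- Let (α, 𝒜, μ) be a probability space and let u_1, …, u_N : α → [0,∞) be measurable umbrella bias functions with weights w_i := ∫ u_i dμ ∈ (0,∞). Let μ_i be the i-th umbrella-biased probability measure, i.e. μ with density u_i/w_i, and assume Σ_{k=1}^N u_k(q)/w_k > 0 for μ-almost every q. Define the overlap matrix M by M_{ij} := ∫ (u_j(q)/w_i) / (Σ_{k=1}^N u_k(q)/w_k) dμ_i(q), assuming each such integral is finite. Then for every j ∈ {1,…,N}, Σ_{i=1}^N w_i · M_{ij} = w_j; that is, the weight vector w = (w_1,…,w_N) satisfies w M = w (w is a left fixed vector of the overlap matrix M). -/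
/-!
Integrating against `μᵢ = (uᵢ / wᵢ) μ` turns `wᵢ Mᵢⱼ` into `∫ (uᵢ / wᵢ) · (uⱼ / S) dμ` with
`S = ∑ₖ uₖ / wₖ`. Summed over `i`, the factors `uᵢ / wᵢ` add up to `S`, which cancels wherever
`S > 0`, i.e. `μ`-almost everywhere, leaving `∫ uⱼ dμ = wⱼ`.
-/

open MeasureTheory

namespace MeasureTheory

variable {α : Type*} [MeasurableSpace α] {μ : Measure α} {ρ : α → ℝ}

lemma integral_withDensity_ofReal (hρ : AEMeasurable ρ μ) (hρ_nonneg : 0 ≤ᵐ[μ] ρ) (f : α → ℝ) :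
    ∫ q, f q ∂μ.withDensity (fun q => ENNReal.ofReal (ρ q)) = ∫ q, ρ q * f q ∂μ := by
  rw [integral_withDensity_eq_integral_toReal_smul₀ hρ.ennreal_ofReal
    (ae_of_all _ fun _ => ENNReal.ofReal_lt_top)]
  refine integral_congr_ae ?_
  filter_upwards [hρ_nonneg] with q hq
  rw [ENNReal.toReal_ofReal hq, smul_eq_mul]

lemma integrable_withDensity_ofReal_iff (hρ : AEMeasurable ρ μ) (hρ_nonneg : 0 ≤ᵐ[μ] ρ)
    {f : α → ℝ} :
    Integrable f (μ.withDensity (fun q => ENNReal.ofReal (ρ q))) ↔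
      Integrable (fun q => ρ q * f q) μ := by
  rw [integrable_withDensity_iff_integrable_smul₀' hρ.ennreal_ofReal
    (ae_of_all _ fun _ => ENNReal.ofReal_lt_top)]
  refine integrable_congr ?_
  filter_upwards [hρ_nonneg] with q hq
  rw [ENNReal.toReal_ofReal hq, smul_eq_mul]

lemma sum_integral_mul_div_sum {ι : Type*} (s : Finset ι) (ρ : ι → α → ℝ) (f : α → ℝ)
    (hint : ∀ i ∈ s, Integrable (fun q => ρ i q * (f q / ∑ k ∈ s, ρ k q)) μ)
    (hsum : ∀ᵐ q ∂μ, ∑ k ∈ s, ρ k q ≠ 0) :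
    ∑ i ∈ s, ∫ q, ρ i q * (f q / ∑ k ∈ s, ρ k q) ∂μ = ∫ q, f q ∂μ := by
  rw [← integral_finsetSum s hint]
  refine integral_congr_ae ?_
  filter_upwards [hsum] with q hq
  rw [← Finset.sum_mul, mul_div_cancel₀ _ hq]

end MeasureTheory

theorem umbrella_weight_fixed_point_general
    {α : Type*} [MeasurableSpace α] (μ : Measure α)
    (N : ℕ) (u : Fin N → α → ℝ)
    (hu_meas : ∀ i, Measurable (u i))
    (hu_nonneg : ∀ i q, 0 ≤ u i q)
    (w : Fin N → ℝ) (hw : ∀ i, w i = ∫ q, u i q ∂μ)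
    (hw_pos : ∀ i, 0 < w i)
    (μb : Fin N → Measure α)
    (hμb : ∀ i, μb i = μ.withDensity (fun q => ENNReal.ofReal (u i q / w i)))
    (hcover : ∀ᵐ q ∂μ, 0 < ∑ k, u k q / w k)
    (M : Fin N → Fin N → ℝ)
    (hM : ∀ i j, M i j = ∫ q, (u j q / w i) / (∑ k, u k q / w k) ∂(μb i))
    (hM_int : ∀ i j,
      Integrable (fun q => (u j q / w i) / (∑ k, u k q / w k)) (μb i)) :
    ∀ j, ∑ i, w i * M i j = w j := by
  intro j
  set S : α → ℝ := fun q => ∑ k, u k q / w k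
  have hρ : ∀ i, AEMeasurable (fun q => u i q / w i) μ :=
    fun i => ((hu_meas i).div_const _).aemeasurable
  have hρ_nonneg : ∀ i, 0 ≤ᵐ[μ] fun q => u i q / w i :=
    fun i => ae_of_all _ fun q => div_nonneg (hu_nonneg i q) (hw_pos i).le
  have hrescale : ∀ i, (fun q => w i * (u i q / w i * (u j q / w i / S q)))
      = fun q => u i q / w i * (u j q / S q) := by
    intro i; funext q; field_simp [(hw_pos i).ne']
  have hterm : ∀ i, w i * M i j = ∫ q, u i q / w i * (u j q / S q) ∂μ := fun i => by
    rw [hM, hμb, integral_withDensity_ofReal (hρ i) (hρ_nonneg i), ← integral_const_mul,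
      hrescale]
  have hint : ∀ i, Integrable (fun q => u i q / w i * (u j q / S q)) μ := fun i => by
    have h := (integrable_withDensity_ofReal_iff (hρ i) (hρ_nonneg i)).1 (hμb i ▸ hM_int i j)
    exact hrescale i ▸ h.const_mul (w i)
  rw [Finset.sum_congr rfl fun i _ => hterm i, hw j]
  exact sum_integral_mul_div_sum _ _ _ (fun i _ => hint i) (hcover.mono fun q hq => hq.ne')

/-- **Theorem 1 (fixed-point equation of umbrella sampling).**
On a probability space `(α, μ)` with measurable umbrella bias functions
`u i : α → [0,∞)`, weights `w i = ∫ u i ∂μ ∈ (0,∞)`, biased probability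
measures `μb i = μ.withDensity (u i / w i)`, and coverage
`∑ k, u k q / w k > 0` for `μ`-a.e. `q`, the overlap matrix
`M i j = ∫ (u j q / w i) / (∑ k, u k q / w k) ∂(μb i)` (each integral finite)
satisfies `∑ i, w i * M i j = w j` for all `j`, i.e. `w M = w`. -/
theorem umbrella_weight_fixed_point
    {α : Type*} [MeasurableSpace α] (μ : Measure α) [IsProbabilityMeasure μ]
    (N : ℕ) (u : Fin N → α → ℝ)
    (hu_meas : ∀ i, Measurable (u i))
    (hu_nonneg : ∀ i q, 0 ≤ u i q)
    (hu_int : ∀ i, Integrable (u i) μ)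
    (w : Fin N → ℝ) (hw : ∀ i, w i = ∫ q, u i q ∂μ)
    (hw_pos : ∀ i, 0 < w i)
    (μb : Fin N → Measure α)
    (hμb : ∀ i, μb i = μ.withDensity (fun q => ENNReal.ofReal (u i q / w i)))
    (hcover : ∀ᵐ q ∂μ, 0 < ∑ k, u k q / w k)
    (M : Fin N → Fin N → ℝ)
    (hM : ∀ i j, M i j = ∫ q, (u j q / w i) / (∑ k, u k q / w k) ∂(μb i))
    (hM_int : ∀ i j,
      Integrable (fun q => (u j q / w i) / (∑ k, u k q / w k)) (μb i)) :
    ∀ j, ∑ i, w i * M i j = w j :=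
  umbrella_weight_fixed_point_general μ N u hu_meas hu_nonneg w hw hw_pos μb hμb hcover M hM hM_int
end

section
/- Let α ∈ ℝ, let μ_A, μ_Z ∈ ℝ and σ_A², σ_Z² > 0. Set σ_B² := α²σ_A² + σ_Z², μ_B := αμ_A + μ_Z, β := ασ_A² / σ_B², μ_{Z_A} := (1 − αβ)μ_A − βμ_Z, and σ_{Z_A}² := (1 − αβ)²σ_A² + β²σ_Z². If B' and Z_A' are independent real random variables with B' ~ N(μ_B, σ_B²) and Z_A' ~ N(μ_{Z_A}, σ_{Z_A}²), then βB' + Z_A' ~ N(μ_A, σ_A²); that is, the reverse-direction model A' = βB' + Z_A' reproduces the distribution of the original cause A. -/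
/-! The reverse model adds two independent Gaussians, so `A'` is Gaussian with mean
`β μ_B + μ_{Z_A} = μ_A` and variance `β² σ_B² + σ_{Z_A}²`. Once `β σ_B² = α σ_A²` is used in place
of the division, that variance equals `σ_A²` by a polynomial identity. -/

open MeasureTheory ProbabilityTheory

theorem gaussianReal_const_mul_add_of_indepFun {Ω : Type*} {mΩ : MeasurableSpace Ω}
    {P : Measure Ω} {X Y : Ω → ℝ} {m₁ m₂ v₁ v₂ : ℝ} (hv₁ : 0 ≤ v₁) (hv₂ : 0 ≤ v₂)
    (hXY : IndepFun X Y P) (hX : P.map X = gaussianReal m₁ v₁.toNNReal)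
    (hY : P.map Y = gaussianReal m₂ v₂.toNNReal) (c : ℝ) :
    P.map (fun ω ↦ c * X ω + Y ω) = gaussianReal (c * m₁ + m₂) (c ^ 2 * v₁ + v₂).toNNReal := by
  have hX_law : HasLaw X (gaussianReal m₁ v₁.toNNReal) P :=
    ⟨.of_map_ne_zero (hX ▸ IsProbabilityMeasure.ne_zero _), hX⟩
  have hcX : P.map (fun ω ↦ c * X ω) = gaussianReal (c * m₁) (c ^ 2 * v₁).toNNReal := by
    rw [(gaussianReal_const_mul hX_law c).map_eq, Real.toNNReal_mul (sq_nonneg c),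
      Real.toNNReal_of_nonneg (sq_nonneg c)]
  have hcXY : IndepFun (fun ω ↦ c * X ω) Y P := hXY.comp (measurable_const_mul c) measurable_id
  rw [Real.toNNReal_add (by positivity) hv₂]
  exact gaussianReal_add_gaussianReal_of_indepFun hcXY hcX hY

theorem reverse_variance_eq {α β σA2 σZ2 σB2 : ℝ} (hσB : σB2 = α ^ 2 * σA2 + σZ2)
    (hβ : β * σB2 = α * σA2) :
    β ^ 2 * σB2 + ((1 - α * β) ^ 2 * σA2 + β ^ 2 * σZ2) = σA2 := by
  linear_combination (2 * β) * hβ - β ^ 2 * hσB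

theorem reverse_model_reproduces_cause_general
    {Ω : Type*} [MeasurableSpace Ω] (P : Measure Ω)
    (α μA μZ σA2 σZ2 : ℝ) (hσA : 0 < σA2) (hσZ : 0 < σZ2)
    (μB σB2 β μZA σZA2 : ℝ)
    (hμB : μB = α * μA + μZ) (hσB : σB2 = α ^ 2 * σA2 + σZ2)
    (hβ : β = α * σA2 / σB2)
    (hμZA : μZA = (1 - α * β) * μA - β * μZ)
    (hσZA : σZA2 = (1 - α * β) ^ 2 * σA2 + β ^ 2 * σZ2)
    (B ZA : Ω → ℝ)
    (h_indep : IndepFun B ZA P)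
    (hB_law : Measure.map B P = gaussianReal μB σB2.toNNReal)
    (hZA_law : Measure.map ZA P = gaussianReal μZA σZA2.toNNReal) :
    Measure.map (fun ω => β * B ω + ZA ω) P = gaussianReal μA σA2.toNNReal := by
  have hσB_pos : 0 < σB2 := hσB ▸ add_pos_of_nonneg_of_pos (by positivity) hσZ
  have hσZA_nonneg : 0 ≤ σZA2 := hσZA ▸ by positivity
  have hβσB : β * σB2 = α * σA2 := by rw [hβ, div_mul_cancel₀ _ hσB_pos.ne']
  rw [gaussianReal_const_mul_add_of_indepFun hσB_pos.le hσZA_nonneg h_indep hB_law hZA_law β,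
    hσZA, reverse_variance_eq hσB hβσB, hμB, hμZA]
  congr 1
  ring

/-- **Reverse-direction model reproduces the cause distribution.** With
`μB = αμA + μZ`, `σB2 = α²σA2 + σZ2`, `β = ασA2/σB2`,
`μZA = (1 − αβ)μA − βμZ`, `σZA2 = (1 − αβ)²σA2 + β²σZ2`, if `B'` and `Z_A'`
are independent with `B' ~ N(μB, σB2)` and `Z_A' ~ N(μZA, σZA2)`, then
`βB' + Z_A' ~ N(μA, σA2)`. -/
theorem reverse_model_reproduces_cause
    {Ω : Type*} [MeasurableSpace Ω] (P : Measure Ω) [IsProbabilityMeasure P]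
    (α μA μZ σA2 σZ2 : ℝ) (hσA : 0 < σA2) (hσZ : 0 < σZ2)
    (μB σB2 β μZA σZA2 : ℝ)
    (hμB : μB = α * μA + μZ) (hσB : σB2 = α ^ 2 * σA2 + σZ2)
    (hβ : β = α * σA2 / σB2)
    (hμZA : μZA = (1 - α * β) * μA - β * μZ)
    (hσZA : σZA2 = (1 - α * β) ^ 2 * σA2 + β ^ 2 * σZ2)
    (B ZA : Ω → ℝ) (hB_meas : Measurable B) (hZA_meas : Measurable ZA)
    (h_indep : IndepFun B ZA P)
    (hB_law : Measure.map B P = gaussianReal μB σB2.toNNReal)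
    (hZA_law : Measure.map ZA P = gaussianReal μZA σZA2.toNNReal) :
    Measure.map (fun ω => β * B ω + ZA ω) P = gaussianReal μA σA2.toNNReal :=
  reverse_model_reproduces_cause_general P α μA μZ σA2 σZ2 hσA hσZ μB σB2 β μZA σZA2 hμB hσB hβ hμZA
    hσZA B ZA h_indep hB_law hZA_law
end

section
/- Let α ∈ ℝ, let μ_A, μ_Z ∈ ℝ and σ_A², σ_Z² > 0. Define μ_B := αμ_A + μ_Z, σ_B² := α²σ_A² + σ_Z², β := ασ_A²/σ_B², μ_{Z_A} := (1 − αβ)μ_A − βμ_Z, and σ_{Z_A}² := (1 − αβ)²σ_A² + β²σ_Z². Then the two linear-Gaussian structural equation models with opposite causal directions induce exactly the same joint distribution of (A, B): the pushforward of the product measure N(μ_A, σ_A²) ⊗ N(μ_Z, σ_Z²) under the map (a, z) ↦ (a, αa + z) equals the pushforward of the product measure N(μ_B, σ_B²) ⊗ N(μ_{Z_A}, σ_{Z_A}²) under the map (b, z) ↦ (βb + z, b). -/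
/-!
A probability measure on `ℝ × ℝ` is determined by the laws of its images under linear
functionals (Cramér–Wold, via characteristic functions). Under either model the functional
`s A + t B` is a linear combination of two independent Gaussians, hence Gaussian, with mean
and variance polynomial in `s, t`. These agree for the two models because `β`, `μ_{Z_A}` and
`σ_{Z_A}²` are the slope, intercept and residual variance of the regression of `A` on `B`.
-/

open MeasureTheory ProbabilityTheory
open scoped NNReal

theorem MeasureTheory.Measure.ext_of_map_strongDual {E : Type*} [NormedAddCommGroup E]
    [NormedSpace ℝ E] [CompleteSpace E] [MeasurableSpace E] [BorelSpace E]
    [SecondCountableTopology E] {μ ν : Measure E} [IsFiniteMeasure μ] [IsFiniteMeasure ν]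
    (h : ∀ L : StrongDual ℝ E, μ.map L = ν.map L) : μ = ν :=
  Measure.ext_of_charFunDual <| funext fun L => by
    rw [charFunDual_eq_charFun_map_one, charFunDual_eq_charFun_map_one, h]

theorem ProbabilityTheory.gaussianReal_prod_map_linear (m₁ m₂ : ℝ) (v₁ v₂ : ℝ≥0) (a b : ℝ) :
    ((gaussianReal m₁ v₁).prod (gaussianReal m₂ v₂)).map (fun p => a * p.1 + b * p.2)
      = gaussianReal (a * m₁ + b * m₂)
          (.mk (a ^ 2) (sq_nonneg a) * v₁ + .mk (b ^ 2) (sq_nonneg b) * v₂) := by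
  have h_conv : ((gaussianReal m₁ v₁).prod (gaussianReal m₂ v₂)).map (fun p => a * p.1 + b * p.2)
      = (gaussianReal m₁ v₁).map (a * ·) ∗ (gaussianReal m₂ v₂).map (b * ·) := by
    rw [Measure.conv, Measure.map_prod_map _ _ (by fun_prop) (by fun_prop),
      Measure.map_map (by fun_prop) (by fun_prop)]
    rfl
  rw [h_conv, gaussianReal_map_const_mul, gaussianReal_map_const_mul,
    gaussianReal_conv_gaussianReal]

theorem StrongDual.apply_real_prod (L : StrongDual ℝ (ℝ × ℝ)) (p : ℝ × ℝ) :
    L p = L (1, 0) * p.1 + L (0, 1) * p.2 := by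
  conv_lhs => rw [show p = p.1 • ((1 : ℝ), (0 : ℝ)) + p.2 • ((0 : ℝ), (1 : ℝ)) by simp]
  rw [map_add, map_smul, map_smul, smul_eq_mul, smul_eq_mul, mul_comm, mul_comm p.2]

/-- **Observational equivalence of the two causal directions.** The forward
linear-Gaussian model `(A, B) = (A, αA + Z_B)` and the reverse model
`(A, B) = (βB + Z_A, B)` induce exactly the same joint distribution:
the pushforward of `N(μA, σA2) ⊗ N(μZ, σZ2)` under `(a, z) ↦ (a, αa + z)`
equals the pushforward of `N(μB, σB2) ⊗ N(μZA, σZA2)` under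
`(b, z) ↦ (βb + z, b)`. -/
theorem linear_gaussian_direction_unidentifiable
    (α μA μZ σA2 σZ2 : ℝ) (hσA : 0 < σA2) (hσZ : 0 < σZ2)
    (μB σB2 β μZA σZA2 : ℝ)
    (hμB : μB = α * μA + μZ) (hσB : σB2 = α ^ 2 * σA2 + σZ2)
    (hβ : β = α * σA2 / σB2)
    (hμZA : μZA = (1 - α * β) * μA - β * μZ)
    (hσZA : σZA2 = (1 - α * β) ^ 2 * σA2 + β ^ 2 * σZ2) :
    Measure.map (fun p : ℝ × ℝ => (p.1, α * p.1 + p.2))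
        ((gaussianReal μA σA2.toNNReal).prod (gaussianReal μZ σZ2.toNNReal))
      = Measure.map (fun p : ℝ × ℝ => (β * p.1 + p.2, p.1))
        ((gaussianReal μB σB2.toNNReal).prod (gaussianReal μZA σZA2.toNNReal)) := by
  have hσB_pos : 0 < σB2 := by rw [hσB]; positivity
  have hσZA_nonneg : 0 ≤ σZA2 := by rw [hσZA]; positivity
  have hβσB : β * σB2 = α * σA2 := by rw [hβ]; field_simp
  refine Measure.ext_of_map_strongDual fun L => ?_
  set s := L (1, 0)
  set t := L (0, 1)
  have h_forward : L ∘ (fun p : ℝ × ℝ => (p.1, α * p.1 + p.2))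
      = fun p => (s + t * α) * p.1 + t * p.2 := by
    funext p; rw [Function.comp_apply, StrongDual.apply_real_prod L]; ring
  have h_reverse : L ∘ (fun p : ℝ × ℝ => (β * p.1 + p.2, p.1))
      = fun p => (s * β + t) * p.1 + s * p.2 := by
    funext p; rw [Function.comp_apply, StrongDual.apply_real_prod L]; ring
  rw [Measure.map_map L.measurable (by fun_prop), Measure.map_map L.measurable (by fun_prop),
    h_forward, h_reverse, gaussianReal_prod_map_linear, gaussianReal_prod_map_linear]
  congr 1
  · linear_combination -(s * β + t) * hμB - s * hμZA
  · ext
    simp only [NNReal.coe_add, NNReal.coe_mul, NNReal.coe_mk, Real.coe_toNNReal _ hσA.le,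
      Real.coe_toNNReal _ hσZ.le, Real.coe_toNNReal _ hσB_pos.le, Real.coe_toNNReal _ hσZA_nonneg]
    linear_combination (s ^ 2 * β ^ 2 - t ^ 2) * hσB - 2 * s * (t + s * β) * hβσB - s ^ 2 * hσZA
end

section
/- Let (α, 𝒜, μ) be a probability space and let u_1, …, u_N : α → [0,∞) be measurable umbrella bias functions with weights w_i := ∫ u_i dμ ∈ (0,∞), biased probability measures μ_i := w_i⁻¹ · (u_i · μ), and assume Σ_{k=1}^N u_k(q)/w_k > 0 for μ-almost every q. Then for every j ∈ {1,…,N}, Σ_{i=1}^N ∫ u_j(q) / (Σ_{k=1}^N u_k(q)/w_k) dμ_i(q) = ∫ u_j dμ; that is, summing the umbrella-reweighted averages of u_j over the N biased distributions recovers the target-measure average ⟨u_j⟩_μ = w_j. -/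
/-!
Integrating against `μ.withDensity ρᵢ` is integrating `ρᵢ · _` against `μ`, so the left-hand side
is `∫ (∑ᵢ uᵢ/wᵢ) · uⱼ / (∑ₖ uₖ/wₖ) dμ`. The integrand equals `uⱼ` wherever the umbrellas cover,
i.e. `μ`-almost everywhere; all integrals exist because `uⱼ / ∑ₖ uₖ/wₖ` is bounded by `wⱼ`.
-/

open MeasureTheory

theorem div_sum_div_le {ι : Type*} {s : Finset ι} {a w : ι → ℝ} (ha : ∀ k ∈ s, 0 ≤ a k)
    (hw : ∀ k ∈ s, 0 < w k) {j : ι} (hj : j ∈ s) :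
    a j / ∑ k ∈ s, a k / w k ≤ w j := by
  have hterm : ∀ k ∈ s, 0 ≤ a k / w k := fun k hk => div_nonneg (ha k hk) (hw k hk).le
  refine div_le_of_le_mul₀ (Finset.sum_nonneg hterm) (hw j hj).le ?_
  rw [← div_le_iff₀' (hw j hj)]
  exact Finset.single_le_sum hterm hj

section withDensity

variable {α : Type*} [MeasurableSpace α] {μ : Measure α}

theorem integral_withDensity_ofReal_eq_integral_mul {ρ : α → ℝ} (hρ : AEMeasurable ρ μ)
    (hρ_nonneg : 0 ≤ᵐ[μ] ρ) (f : α → ℝ) :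
    ∫ q, f q ∂μ.withDensity (fun q => ENNReal.ofReal (ρ q)) = ∫ q, ρ q * f q ∂μ := by
  rw [integral_withDensity_eq_integral_toReal_smul₀ hρ.ennreal_ofReal
    (Filter.Eventually.of_forall fun _ => ENNReal.ofReal_lt_top)]
  refine integral_congr_ae ?_
  filter_upwards [hρ_nonneg] with q hq
  rw [ENNReal.toReal_ofReal hq, smul_eq_mul]

theorem sum_integral_withDensity_ofReal_eq_integral_sum_mul {ι : Type*} (s : Finset ι)
    {ρ : ι → α → ℝ} (hρ_int : ∀ i ∈ s, Integrable (ρ i) μ) (hρ_nonneg : ∀ i ∈ s, 0 ≤ᵐ[μ] ρ i)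
    {f : α → ℝ} (hf : AEStronglyMeasurable f μ) {C : ℝ} (hf_bound : ∀ᵐ q ∂μ, ‖f q‖ ≤ C) :
    ∑ i ∈ s, ∫ q, f q ∂μ.withDensity (fun q => ENNReal.ofReal (ρ i q))
      = ∫ q, (∑ i ∈ s, ρ i q) * f q ∂μ := by
  simp_rw [Finset.sum_mul]
  rw [integral_finsetSum s fun i hi => (hρ_int i hi).mul_bdd hf hf_bound]
  exact Finset.sum_congr rfl fun i hi =>
    integral_withDensity_ofReal_eq_integral_mul (hρ_int i hi).aemeasurable (hρ_nonneg i hi) f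

end withDensity

theorem umbrella_uj_reconstruction_general
    {α : Type*} [MeasurableSpace α] (μ : Measure α)
    (N : ℕ) (u : Fin N → α → ℝ)
    (hu_nonneg : ∀ i q, 0 ≤ u i q)
    (hu_int : ∀ i, Integrable (u i) μ)
    (w : Fin N → ℝ)
    (hw_pos : ∀ i, 0 < w i)
    (μb : Fin N → Measure α)
    (hμb : ∀ i, μb i = μ.withDensity (fun q => ENNReal.ofReal (u i q / w i)))
    (hcover : ∀ᵐ q ∂μ, 0 < ∑ k, u k q / w k) :
    ∀ j, ∑ i, ∫ q, u j q / (∑ k, u k q / w k) ∂(μb i) = ∫ q, u j q ∂μ := by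
  intro j
  have hf_meas : AEStronglyMeasurable (fun q => u j q / ∑ k, u k q / w k) μ :=
    ((hu_int j).aemeasurable.div
      (Finset.aemeasurable_fun_sum _ fun k _ => (hu_int k).aemeasurable.div_const _))
      |>.aestronglyMeasurable
  have hf_bound : ∀ᵐ q ∂μ, ‖u j q / ∑ k, u k q / w k‖ ≤ w j :=
    Filter.Eventually.of_forall fun q => by
      rw [Real.norm_of_nonneg (div_nonneg (hu_nonneg j q)
        (Finset.sum_nonneg fun k _ => div_nonneg (hu_nonneg k q) (hw_pos k).le))]
      exact div_sum_div_le (fun k _ => hu_nonneg k q) (fun k _ => hw_pos k) (Finset.mem_univ j)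
  simp_rw [hμb]
  rw [sum_integral_withDensity_ofReal_eq_integral_sum_mul Finset.univ
    (fun i _ => (hu_int i).div_const _)
    (fun i _ => Filter.Eventually.of_forall fun q => div_nonneg (hu_nonneg i q) (hw_pos i).le)
    hf_meas hf_bound]
  refine integral_congr_ae ?_
  filter_upwards [hcover] with q hq
  exact mul_div_cancel₀ _ hq.ne'

/-- **Key identity (Eq. 18).** For every `j`, summing the umbrella-reweighted
averages of `u j` over the `N` biased distributions recovers the
target-measure average: `∑ i, ∫ u j q / (∑ k, u k q / w k) ∂(μb i) = ∫ u j ∂μ`. -/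
theorem umbrella_uj_reconstruction
    {α : Type*} [MeasurableSpace α] (μ : Measure α) [IsProbabilityMeasure μ]
    (N : ℕ) (u : Fin N → α → ℝ)
    (hu_meas : ∀ i, Measurable (u i))
    (hu_nonneg : ∀ i q, 0 ≤ u i q)
    (hu_int : ∀ i, Integrable (u i) μ)
    (w : Fin N → ℝ) (hw : ∀ i, w i = ∫ q, u i q ∂μ)
    (hw_pos : ∀ i, 0 < w i)
    (μb : Fin N → Measure α)
    (hμb : ∀ i, μb i = μ.withDensity (fun q => ENNReal.ofReal (u i q / w i)))
    (hcover : ∀ᵐ q ∂μ, 0 < ∑ k, u k q / w k) :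
    ∀ j, ∑ i, ∫ q, u j q / (∑ k, u k q / w k) ∂(μb i) = ∫ q, u j q ∂μ :=
  umbrella_uj_reconstruction_general μ N u hu_nonneg hu_int w hw_pos μb hμb hcover
end
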